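/- Let Θ, Θ̃, Λ, Λ̃ be measurable functions with Θ(u) = Λ(u/2)Θ(u/2) and Θ̃(u) = Λ̃(u/2)Θ̃(u/2) a.e., Λ, Λ̃ being 2π-periodic, and suppose ∑_{k∈ℤ} Θ(u+2πk) conj(Θ̃(u+2πk)) = 1 a.e. Then Λ(v) conj(Λ̃(v)) + Λ(v+π) conj(Λ̃(v+π)) = 1 for a.e. v. -/

import Mathlib

/-!
By the refinement equations, the term of index `k` of the bracket series at `2v` is
`Λ(v+πk) conj(Λ̃(v+πk))` times the term of the bracket series at `v+πk`. Splitting `k` by parity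
and using the `2π`-periodicity of the filters, the bracket at `2v` (which is `1`) equals
`Λ(v) conj(Λ̃(v)) · [bracket at v] + Λ(v+π) conj(Λ̃(v+π)) · [bracket at v+π]`,
and both brackets are `1`.
-/

open MeasureTheory ComplexConjugate

theorem HasSum.int_even_add_odd {M : Type*} [AddCommMonoid M] [TopologicalSpace M]
    [ContinuousAdd M] {f : ℤ → M} {a b : M} (he : HasSum (fun k ↦ f (2 * k)) a)
    (ho : HasSum (fun k ↦ f (2 * k + 1)) b) : HasSum f (a + b) := by
  have hmul := mul_right_injective₀ (two_ne_zero' ℤ)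
  replace ho := ((add_left_injective 1).comp hmul).hasSum_range_iff.2 ho
  refine (hmul.hasSum_range_iff.2 he).add_isCompl ?_ ho
  simpa [Function.comp_def] using Int.isCompl_even_odd

-- `tsum` is `0` on non-summable families, so a nonzero value certifies summability.
theorem HasSum.of_tsum_eq {M : Type*} [AddCommMonoid M] [TopologicalSpace M] {ι : Type*}
    {f : ι → M} {a : M} (ha : a ≠ 0) (h : ∑' i, f i = a) : HasSum f a := by
  have hf : Summable f := by
    by_contra hf
    exact ha (h ▸ tsum_eq_zero_of_not_summable hf)
  exact h ▸ hf.hasSum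

theorem ae_comp_mul_add {P : ℝ → Prop} {a : ℝ} (ha : a ≠ 0) (b : ℝ)
    (h : ∀ᵐ u, P u) : ∀ᵐ v, P (a * v + b) :=
  ((measurePreserving_add_right volume b).quasiMeasurePreserving.comp
    (Measure.quasiMeasurePreserving_smul volume ha)).ae h

theorem Function.Periodic.hasSum_half_lattice_mul {α R : Type*} [CommRing α]
    [NonUnitalNonAssocSemiring R] [TopologicalSpace R] [IsTopologicalSemiring R]
    {m g : α → R} {c v : α} {a b : R} (hm : Function.Periodic m (2 * c))
    (ha : HasSum (fun k : ℤ ↦ g (v + 2 * c * k)) a)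
    (hb : HasSum (fun k : ℤ ↦ g (v + c + 2 * c * k)) b) :
    HasSum (fun k : ℤ ↦ m (v + c * k) * g (v + c * k)) (m v * a + m (v + c) * b) := by
  have hshift : ∀ (x : α) (k : ℤ), m (x + 2 * c * k) = m x := fun x k ↦ by
    rw [mul_comm (2 * c)]; exact hm.int_mul k x
  refine HasSum.int_even_add_odd ?_ ?_
  · convert ha.mul_left (m v) using 2 with k
    rw [show v + c * ((2 * k : ℤ) : α) = v + 2 * c * k by push_cast; ring, hshift]
  · convert hb.mul_left (m (v + c)) using 2 with k
    rw [show v + c * ((2 * k + 1 : ℤ) : α) = v + c + 2 * c * k by push_cast; ring, hshift]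

theorem stmt_12_general (Θ Θt Λ Λt : ℝ → ℂ)
    (hΛper : ∀ u : ℝ, Λ (u + 2 * Real.pi) = Λ u)
    (hΛtper : ∀ u : ℝ, Λt (u + 2 * Real.pi) = Λt u)
    (href : ∀ᵐ u ∂(volume : Measure ℝ), Θ u = Λ (u / 2) * Θ (u / 2))
    (hreft : ∀ᵐ u ∂(volume : Measure ℝ), Θt u = Λt (u / 2) * Θt (u / 2))
    (hbracket : ∀ᵐ u ∂(volume : Measure ℝ),
      ∑' k : ℤ, Θ (u + 2 * Real.pi * (k : ℝ)) * conj (Θt (u + 2 * Real.pi * (k : ℝ))) = 1) :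
    ∀ᵐ v ∂(volume : Measure ℝ),
      Λ v * conj (Λt v) + Λ (v + Real.pi) * conj (Λt (v + Real.pi)) = 1 := by
  have hper : Function.Periodic (fun x ↦ Λ x * conj (Λt x)) (2 * Real.pi) := fun x ↦ by
    simp only [hΛper, hΛtper]
  have hrefine : ∀ᵐ v, ∀ k : ℤ,
      Θ (2 * v + 2 * Real.pi * k) * conj (Θt (2 * v + 2 * Real.pi * k)) =
        Λ (v + Real.pi * k) * conj (Λt (v + Real.pi * k)) *
        (Θ (v + Real.pi * k) * conj (Θt (v + Real.pi * k))) := by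
    refine ae_all_iff.2 fun k ↦ ?_
    filter_upwards [ae_comp_mul_add two_ne_zero (2 * Real.pi * k) href,
      ae_comp_mul_add two_ne_zero (2 * Real.pi * k) hreft] with v hv hvt
    rw [hv, hvt, show (2 * v + 2 * Real.pi * k) / 2 = v + Real.pi * k by ring, map_mul]
    ring
  filter_upwards [hrefine, hbracket, ae_comp_mul_add one_ne_zero Real.pi hbracket,
    ae_comp_mul_add two_ne_zero 0 hbracket] with v hv h0 hπ h2
  simp only [one_mul, add_zero] at hπ h2
  have hsum := hper.hasSum_half_lattice_mul (g := fun x ↦ Θ x * conj (Θt x))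
    (HasSum.of_tsum_eq one_ne_zero h0) (HasSum.of_tsum_eq one_ne_zero hπ)
  simp only [mul_one] at hsum
  rw [← funext hv] at hsum
  exact hsum.unique (HasSum.of_tsum_eq one_ne_zero h2)

/-- the biorthogonality of the scaling brackets transfers to the
low-pass filters: Λ(v)conj(Λ̃(v)) + Λ(v+π)conj(Λ̃(v+π)) = 1 a.e. -/
theorem stmt_12 (Θ Θt Λ Λt : ℝ → ℂ)
    (hΘmeas : Measurable Θ) (hΘtmeas : Measurable Θt)
    (hΛmeas : Measurable Λ) (hΛtmeas : Measurable Λt)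
    (hΛper : ∀ u : ℝ, Λ (u + 2 * Real.pi) = Λ u)
    (hΛtper : ∀ u : ℝ, Λt (u + 2 * Real.pi) = Λt u)
    (href : ∀ᵐ u ∂(volume : Measure ℝ), Θ u = Λ (u / 2) * Θ (u / 2))
    (hreft : ∀ᵐ u ∂(volume : Measure ℝ), Θt u = Λt (u / 2) * Θt (u / 2))
    (hbracket : ∀ᵐ u ∂(volume : Measure ℝ),
      ∑' k : ℤ, Θ (u + 2 * Real.pi * (k : ℝ)) * conj (Θt (u + 2 * Real.pi * (k : ℝ))) = 1) :
    ∀ᵐ v ∂(volume : Measure ℝ),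
      Λ v * conj (Λt v) + Λ (v + Real.pi) * conj (Λt (v + Real.pi)) = 1 :=
  stmt_12_general Θ Θt Λ Λt hΛper hΛtper href hreft hbracket
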